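/- For every connected graph G with at least 2 vertices, the minimum size of a connecting transition set of G equals the minimum cost of a connecting hypergraph of G. -/

import Mathlib

/-!
A connecting hypergraph yields a connecting transition set: a set `E` of `k ≥ 2` vertices inducing
a connected subgraph is traversed by a walk that uses only `k - 2` transitions. The walk is built by
prepending a vertex whose removal keeps `E` connected to a walk through the rest; to make the old
walk start at a neighbour `w` of the new vertex, first walk back from `w` to its start along the
walk itself, which is free because backtracks are always allowed. Sub-walks of these walks join
all pairs of non-adjacent vertices.

Conversely, call two edges linked when they form a transition of `T`. A `T`-compatible walk never
leaves a class of linked edges, so the vertex sets of these classes form a connecting hypergraph,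
and a class whose edges cover `k` vertices contains at least `k - 2` links, which pays its cost.
-/

variable {V : Type*}

/-- The transition consisting of the edges `ab` and `bc`, written `abc`. -/
def transitionOf (a b c : V) : Sym2 (Sym2 V) := s(s(a, b), s(b, c))

def SimpleGraph.IsTransition (G : SimpleGraph V) (t : Sym2 (Sym2 V)) : Prop :=
  ∃ a b c, G.Adj a b ∧ G.Adj b c ∧ a ≠ c ∧ t = transitionOf a b c

/-- A list of vertices (the support of a walk) is `T`-compatible: every pair of
consecutive edges is either a transition of `T` or a backtrack. -/
def TCompatible (T : Set (Sym2 (Sym2 V))) (l : List V) : Prop :=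
  ∀ (i : ℕ) (h : i + 2 < l.length),
    l[i]'(by omega) = l[i + 2]'h ∨
    transitionOf (l[i]'(by omega)) (l[i + 1]'(by omega)) (l[i + 2]'h) ∈ T

def SimpleGraph.TConnected (G : SimpleGraph V) (T : Set (Sym2 (Sym2 V))) : Prop :=
  ∀ u v : V, ∃ p : G.Walk u v, TCompatible T p.support

def SimpleGraph.ConnectingTransitionSet (G : SimpleGraph V)
    (T : Finset (Sym2 (Sym2 V))) : Prop :=
  (∀ t ∈ T, G.IsTransition t) ∧ G.TConnected ↑T

def SimpleGraph.ConnectingHypergraph (G : SimpleGraph V) (H : Finset (Finset V)) : Prop :=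
  (∀ E ∈ H, 2 ≤ E.card ∧ (G.induce (E : Set V)).Connected) ∧
  ∀ u v : V, u ≠ v → ¬G.Adj u v → ∃ E ∈ H, u ∈ E ∧ v ∈ E

def hcost (H : Finset (Finset V)) : ℕ := ∑ E ∈ H, (E.card - 2)

/-- The quantity τ(G): the sum over co-connected components `C` of `G` with `|C| ≥ 2`
of `|C| − 2` if `G[C]` is connected and `|C| − 1` otherwise. -/
noncomputable def tau {V : Type*} [Fintype V] (G : SimpleGraph V) : ℕ := by
  classical
  haveI : Fintype Gᶜ.ConnectedComponent := Fintype.ofFinite _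
  exact ∑ C : Gᶜ.ConnectedComponent,
    if 2 ≤ C.supp.ncard then
      (if (G.induce C.supp).Connected then C.supp.ncard - 2 else C.supp.ncard - 1)
    else 0

theorem transitionOf_comm (a b c : V) : transitionOf c b a = transitionOf a b c := by
  rw [transitionOf, transitionOf, Sym2.eq_swap, Sym2.eq_swap (a := c), Sym2.eq_swap (a := b)]

theorem Sym2.card_toFinset_le_two [DecidableEq V] (z : Sym2 V) : z.toFinset.card ≤ 2 := by
  induction z using Sym2.ind with
  | _ x y => rw [Sym2.toFinset_mk_eq]; exact Finset.card_le_two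

theorem Sym2.card_toFinset_union_le [DecidableEq V] {z : Sym2 V} {s : Finset V} {x : V}
    (hz : x ∈ z) (hs : x ∈ s) : (z.toFinset ∪ s).card ≤ s.card + 1 := by
  obtain ⟨y, rfl⟩ := Sym2.mem_iff_exists.mp hz
  rw [Sym2.toFinset_mk_eq, Finset.insert_union,
    Finset.insert_eq_of_mem (Finset.mem_union_right _ hs), Finset.singleton_union]
  exact Finset.card_insert_le _ _

theorem Nat.sInf_eq_sInf_of_forall_exists_le {s t : Set ℕ} (hst : ∀ a ∈ s, ∃ b ∈ t, b ≤ a)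
    (hts : ∀ b ∈ t, ∃ a ∈ s, a ≤ b) : sInf s = sInf t := by
  have hle : ∀ {s t : Set ℕ}, (∀ a ∈ s, ∃ b ∈ t, b ≤ a) → s.Nonempty → sInf t ≤ sInf s :=
    fun h hs => let ⟨_, hb, hba⟩ := h _ (Nat.sInf_mem hs); (Nat.sInf_le hb).trans hba
  rcases s.eq_empty_or_nonempty with rfl | hs
  · have ht : t = ∅ := Set.eq_empty_of_forall_notMem fun b hb => by
      obtain ⟨a, ha, -⟩ := hts b hb
      exact ha
    rw [ht]
  · obtain ⟨b, hb, -⟩ := hst _ (Nat.sInf_mem hs)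
    exact le_antisymm (hle hts ⟨b, hb⟩) (hle hst hs)

theorem hcost_image_le {ι α : Type*} [DecidableEq ι] [DecidableEq V] (s : Finset ι)
    (F : ι → Finset V) (T : Finset α) (φ : α → ι)
    (hF : ∀ i ∈ s, (F i).card ≤ (T.filter (φ · = i)).card + 2) :
    hcost (s.image F) ≤ T.card :=
  calc hcost (s.image F) ≤ ∑ i ∈ s, ((F i).card - 2) :=
        Finset.sum_image_le_of_nonneg fun _ _ => Nat.zero_le _
    _ ≤ ∑ i ∈ s, (T.filter (φ · = i)).card := Finset.sum_le_sum fun i hi => by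
        have := hF i hi
        omega
    _ = (T.filter (φ · ∈ s)).card := Finset.sum_card_fiberwise_eq_card_filter _ _ _
    _ ≤ T.card := Finset.card_filter_le _ _

def transitionGraph (T : Set (Sym2 (Sym2 V))) : SimpleGraph (Sym2 V) :=
  SimpleGraph.fromRel fun e f => s(e, f) ∈ T

section transitionGraph

variable {T : Set (Sym2 (Sym2 V))} {e f : Sym2 V}

theorem transitionGraph_adj : (transitionGraph T).Adj e f ↔ e ≠ f ∧ s(e, f) ∈ T := by
  simp [transitionGraph, Sym2.eq_swap (a := f)]

theorem transitionGraph_reachable_of_mem (h : s(e, f) ∈ T) :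
    (transitionGraph T).Reachable e f := by
  rcases eq_or_ne e f with rfl | hef
  · rfl
  · exact (transitionGraph_adj.mpr ⟨hef, h⟩).reachable

end transitionGraph

namespace SimpleGraph

variable {G : SimpleGraph V}

theorem exists_connected_induce_erase [DecidableEq V] {S : Finset V}
    (hS : (G.induce (S : Set V)).Connected) (h1 : 1 < S.card) :
    ∃ v ∈ S, (G.induce (S.erase v : Set V)).Connected := by
  have : Nontrivial (S : Set V) := (Finset.one_lt_card_iff_nontrivial.mp h1).coe_sort
  obtain ⟨⟨v, hv⟩, hconn⟩ := hS.exists_connected_induce_compl_singleton_of_finite_nontrivial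
  refine ⟨v, hv, hconn.map ⟨fun x => ⟨x.1.1, ?_⟩, fun h => h⟩ ?_⟩
  · exact Finset.mem_erase.mpr ⟨fun h => x.2 (Subtype.ext h), x.1.2⟩
  · rintro ⟨y, hy⟩
    obtain ⟨hyv, hyS⟩ := Finset.mem_erase.mp hy
    exact ⟨⟨⟨y, hyS⟩, fun h => hyv (congrArg Subtype.val h)⟩, rfl⟩

theorem induction_on_induce_connected [DecidableEq V] {P : Finset V → Prop}
    (singleton : ∀ v, P {v})
    (insert : ∀ ⦃S : Finset V⦄ ⦃u w : V⦄, u ∉ S → w ∈ S → G.Adj u w → P S → P (insert u S))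
    {S : Finset V} (hS : (G.induce (S : Set V)).Connected) : P S := by
  induction hn : S.card using Nat.strong_induction_on generalizing S with
  | _ n ih =>
  obtain ⟨⟨v, hv⟩⟩ := hS.nonempty
  rcases Nat.lt_or_ge 1 S.card with h1 | h1
  · obtain ⟨u, hu, hconn⟩ := exists_connected_induce_erase hS h1
    have : Nontrivial (S : Set V) := (Finset.one_lt_card_iff_nontrivial.mp h1).coe_sort
    obtain ⟨⟨w, hw⟩, huw⟩ := hS.preconnected.exists_adj_of_nontrivial ⟨u, hu⟩
    replace huw : G.Adj u w := huw
    rw [← Finset.insert_erase hu]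
    exact insert (Finset.notMem_erase u S) (Finset.mem_erase.mpr ⟨huw.ne', hw⟩) huw
      (ih _ (hn ▸ Finset.card_erase_lt_of_mem hu) hconn rfl)
  · rw [Finset.eq_singleton_iff_unique_mem.mpr
      ⟨hv, fun x hx => Finset.card_le_one.mp h1 x hx v hv⟩]
    exact singleton v

theorem IsTransition.mem_edgeSet_and_exists_mem {e f : Sym2 V} (h : G.IsTransition s(e, f)) :
    e ∈ G.edgeSet ∧ ∃ x, x ∈ e ∧ x ∈ f := by
  obtain ⟨a, b, c, hab, hbc, -, heq⟩ := h
  rcases Sym2.eq_iff.mp heq with ⟨rfl, rfl⟩ | ⟨rfl, rfl⟩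
  · exact ⟨hab, b, Sym2.mem_mk_right a b, Sym2.mem_mk_left b c⟩
  · exact ⟨hbc, b, Sym2.mem_mk_left b c, Sym2.mem_mk_right a b⟩

theorem mem_edgeSet_of_transitionGraph_reachable {T : Set (Sym2 (Sym2 V))}
    (hT : ∀ t ∈ T, G.IsTransition t) {e f : Sym2 V} (he : e ∈ G.edgeSet)
    (h : (transitionGraph T).Reachable e f) : f ∈ G.edgeSet := by
  obtain ⟨p⟩ := h.symm
  cases p with
  | nil => exact he
  | cons h' _ => exact (hT _ (transitionGraph_adj.mp h').2).mem_edgeSet_and_exists_mem.1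

namespace Walk

variable {T T' : Set (Sym2 (Sym2 V))} {u v w x y : V}

def IsCompatible (T : Set (Sym2 (Sym2 V))) (p : G.Walk u v) : Prop :=
  ∀ i, i + 2 ≤ p.length →
    p.getVert i = p.getVert (i + 2) ∨
      transitionOf (p.getVert i) (p.getVert (i + 1)) (p.getVert (i + 2)) ∈ T

theorem isCompatible_iff_tCompatible {p : G.Walk u v} :
    p.IsCompatible T ↔ TCompatible T p.support := by
  simp only [IsCompatible, TCompatible, length_support, support_getElem_eq_getVert]
  exact ⟨fun h i hi => h i (by omega), fun h i hi => h i (by omega)⟩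

theorem isCompatible_of_length_le_one {p : G.Walk u v} (hp : p.length ≤ 1) :
    p.IsCompatible T :=
  fun i hi => absurd hi (by omega)

theorem IsCompatible.mono {p : G.Walk u v} (hp : p.IsCompatible T) (h : T ⊆ T') :
    p.IsCompatible T' :=
  fun i hi => (hp i hi).imp_right (@h _)

theorem IsCompatible.inter_isTransition {p : G.Walk u v} (hp : p.IsCompatible T) :
    p.IsCompatible {t | t ∈ T ∧ G.IsTransition t} := fun i hi =>
  or_iff_not_imp_left.mpr fun hne => ⟨(hp i hi).resolve_left hne, _, _, _,
    p.adj_getVert_succ (by omega), p.adj_getVert_succ (by omega), hne, rfl⟩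

theorem IsCompatible.cons {p : G.Walk v w} (hp : p.IsCompatible T) (h : G.Adj u v)
    (hu : u = p.snd ∨ transitionOf u v p.snd ∈ T) : (p.cons h).IsCompatible T := by
  rintro (_ | i) hi
  · simpa using hu
  · exact hp i (by simp at hi; omega)

/-- Two steps of `g` in the same direction read a triple of `p`, possibly reversed; two opposite
steps read a backtrack. -/
theorem IsCompatible.of_getVert_eq {p : G.Walk u v} {q : G.Walk x y} (hp : p.IsCompatible T)
    (g : ℕ → ℕ) (hg : ∀ i < q.length, g (i + 1) = g i + 1 ∨ g i = g (i + 1) + 1)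
    (hq : ∀ i ≤ q.length, g i ≤ p.length ∧ q.getVert i = p.getVert (g i)) :
    q.IsCompatible T := by
  intro i hi
  obtain ⟨hle0, h0⟩ := hq i (by omega)
  obtain ⟨-, h1⟩ := hq (i + 1) (by omega)
  obtain ⟨hle2, h2⟩ := hq (i + 2) hi
  have e2 := hg (i + 1) (by omega)
  rw [show i + 1 + 1 = i + 2 from rfl] at e2
  rw [h0, h1, h2]
  rcases hg i (by omega) with e1 | e1 <;> rcases e2 with e2 | e2
  · rw [e1, show g (i + 2) = g i + 2 by omega]
    exact hp _ (by omega)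
  · exact Or.inl (by rw [show g (i + 2) = g i by omega])
  · exact Or.inl (by rw [show g (i + 2) = g i by omega])
  · rw [e2, show g i = g (i + 2) + 2 by omega]
    exact (hp _ (by omega)).imp Eq.symm fun h => by rwa [transitionOf_comm]

theorem IsCompatible.reverse {p : G.Walk u v} (hp : p.IsCompatible T) :
    p.reverse.IsCompatible T :=
  hp.of_getVert_eq (p.length - ·) (fun i hi => by simp only [length_reverse] at hi; omega)
    fun i _ => ⟨Nat.sub_le _ _, p.getVert_reverse i⟩

theorem IsCompatible.of_isSubwalk {p : G.Walk u v} {q : G.Walk x y} (hp : p.IsCompatible T)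
    (hq : q.IsSubwalk p) : q.IsCompatible T := by
  obtain ⟨r, r', rfl⟩ := hq
  refine hp.of_getVert_eq (r.length + ·) (fun i _ => Or.inl rfl) fun i hi =>
    ⟨by simp; omega, ?_⟩
  rw [getVert_append', if_pos (by simp; omega), getVert_append, if_neg (by omega),
    Nat.add_sub_cancel_left]

theorem IsCompatible.exists_walk_from {p : G.Walk u v} (hp : p.IsCompatible T)
    (hw : w ∈ p.support) : ∃ q : G.Walk w v, q.IsCompatible T ∧ p.support ⊆ q.support := by
  obtain ⟨k, rfl, hk⟩ := mem_support_iff_exists_getVert.mp hw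
  refine ⟨(p.take k).reverse.append p,
    hp.of_getVert_eq (fun i => if i ≤ k then k - i else i - k) ?_ ?_,
    support_subset_support_append_right _ _⟩
  · intro i _
    split_ifs <;> omega
  · intro i hi
    simp only [length_append, length_reverse, take_length, min_eq_left hk] at hi
    simp only [getVert_append', length_reverse, take_length, min_eq_left hk, getVert_reverse,
      take_getVert]
    split_ifs
    · exact ⟨by omega, by rw [min_eq_right (by omega)]⟩
    · exact ⟨by omega, rfl⟩

theorem exists_isSubwalk_of_mem_support {p : G.Walk u v} (hx : x ∈ p.support)
    (hy : y ∈ p.support) :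
    (∃ q : G.Walk x y, q.IsSubwalk p) ∨ ∃ q : G.Walk y x, q.IsSubwalk p := by
  classical
  have hspec := p.take_spec hx
  have hy' : y ∈ (p.takeUntil x hx).support ∨ y ∈ (p.dropUntil x hx).support := by
    rwa [← mem_support_append_iff, hspec]
  rcases hy' with hy' | hy'
  · exact Or.inr ⟨_, (isSubwalk_of_append_right (take_spec _ hy').symm).trans
      (isSubwalk_of_append_left hspec.symm)⟩
  · exact Or.inl ⟨_, (isSubwalk_of_append_left (take_spec _ hy').symm).trans
      (isSubwalk_of_append_right hspec.symm)⟩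

theorem IsCompatible.exists_walk {p : G.Walk u v} (hp : p.IsCompatible T) (hx : x ∈ p.support)
    (hy : y ∈ p.support) : ∃ q : G.Walk x y, q.IsCompatible T := by
  rcases exists_isSubwalk_of_mem_support hx hy with ⟨q, hq⟩ | ⟨q, hq⟩
  · exact ⟨q, hp.of_isSubwalk hq⟩
  · exact ⟨q.reverse, (hp.of_isSubwalk hq).reverse⟩

theorem IsCompatible.transitionGraph_reachable {p : G.Walk u v} (hp : p.IsCompatible T)
    (hpos : 0 < p.length) :
    (transitionGraph T).Reachable s(u, p.snd) s(p.penultimate, v) := by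
  have key : ∀ i < p.length,
      (transitionGraph T).Reachable s(u, p.snd) s(p.getVert i, p.getVert (i + 1)) := by
    intro i
    induction i with
    | zero => intro _; simp
    | succ i ih =>
      intro hi
      refine (ih (by omega)).trans ?_
      rcases hp i (by omega) with h | h
      · rw [show i + 1 + 1 = i + 2 from rfl, ← h, Sym2.eq_swap]
      · exact transitionGraph_reachable_of_mem h
  simpa [Nat.sub_add_cancel hpos] using key (p.length - 1) (by omega)

end Walk

theorem tConnected_iff {T : Set (Sym2 (Sym2 V))} :
    G.TConnected T ↔ ∀ u v, ∃ p : G.Walk u v, p.IsCompatible T := by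
  simp only [TConnected, Walk.isCompatible_iff_tCompatible]

theorem exists_isCompatible_walk_covering [DecidableEq V] {S : Finset V}
    (hS : (G.induce (S : Set V)).Connected) (h2 : 2 ≤ S.card) :
    ∃ (T : Finset (Sym2 (Sym2 V))) (a b : V) (p : G.Walk a b),
      T.card + 2 ≤ S.card ∧ (∀ x ∈ S, x ∈ p.support) ∧ p.IsCompatible T := by
  refine induction_on_induce_connected (P := fun S => 2 ≤ S.card →
    ∃ (T : Finset (Sym2 (Sym2 V))) (a b : V) (p : G.Walk a b),
      T.card + 2 ≤ S.card ∧ (∀ x ∈ S, x ∈ p.support) ∧ p.IsCompatible T)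
    (fun v h => by simp at h) ?_ hS h2
  intro S u w hu hw huw ih _
  have hcard := Finset.card_insert_of_notMem hu
  by_cases hS2 : 2 ≤ S.card
  · obtain ⟨T, a, b, p, hT, hcover, hp⟩ := ih hS2
    obtain ⟨q, hq, hsub⟩ := hp.exists_walk_from (hcover w hw)
    refine ⟨insert (transitionOf u w q.snd) T, u, b, q.cons huw,
      by have := Finset.card_insert_le (transitionOf u w q.snd) T; omega, ?_,
      (hq.mono (by simp)).cons huw (Or.inr (by simp))⟩
    intro x hx
    rcases Finset.mem_insert.mp hx with rfl | hx
    · exact Walk.start_mem_support _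
    · exact List.mem_cons_of_mem _ (hsub (hcover x hx))
  · have := Finset.card_pos.mpr ⟨w, hw⟩
    refine ⟨∅, u, w, huw.toWalk, by rw [Finset.card_empty]; omega, ?_,
      Walk.isCompatible_of_length_le_one (by simp)⟩
    intro x hx
    rcases Finset.mem_insert.mp hx with rfl | hx
    · simp
    · simp [Finset.card_le_one.mp (by omega) x hx w hw]

theorem ConnectingHypergraph.exists_connectingTransitionSet {H : Finset (Finset V)}
    (hH : G.ConnectingHypergraph H) :
    ∃ T : Finset (Sym2 (Sym2 V)), G.ConnectingTransitionSet T ∧ T.card ≤ hcost H := by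
  classical
  have hwalks : ∀ E ∈ H, ∃ TE : Finset (Sym2 (Sym2 V)), TE.card + 2 ≤ E.card ∧
      ∀ u ∈ E, ∀ v ∈ E, ∃ q : G.Walk u v, q.IsCompatible TE := by
    intro E hE
    obtain ⟨TE, a, b, p, hcard, hcover, hp⟩ :=
      exists_isCompatible_walk_covering (hH.1 E hE).2 (hH.1 E hE).1
    exact ⟨TE, hcard, fun u hu v hv => hp.exists_walk (hcover u hu) (hcover v hv)⟩
  choose! f hfcard hfwalk using hwalks
  refine ⟨(H.biUnion f).filter G.IsTransition,
    ⟨fun t ht => (Finset.mem_filter.mp ht).2, ?_⟩, ?_⟩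
  · refine tConnected_iff.mpr fun u v => ?_
    suffices ∃ p : G.Walk u v, p.IsCompatible (H.biUnion f : Set (Sym2 (Sym2 V))) by
      obtain ⟨p, hp⟩ := this
      exact ⟨p, by simpa using hp.inter_isTransition⟩
    by_cases huv : u = v
    · subst huv
      exact ⟨.nil, Walk.isCompatible_of_length_le_one (by simp)⟩
    by_cases hadj : G.Adj u v
    · exact ⟨hadj.toWalk, Walk.isCompatible_of_length_le_one (by simp)⟩
    obtain ⟨E, hE, hu, hv⟩ := hH.2 u v huv hadj
    obtain ⟨q, hq⟩ := hfwalk E hE u hu v hv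
    exact ⟨q, hq.mono fun t ht => Finset.mem_biUnion.mpr ⟨E, hE, ht⟩⟩
  · calc ((H.biUnion f).filter G.IsTransition).card ≤ (H.biUnion f).card :=
          Finset.card_filter_le _ _
      _ ≤ ∑ E ∈ H, (f E).card := Finset.card_biUnion_le
      _ ≤ hcost H := Finset.sum_le_sum fun E hE => by have := hfcard E hE; omega

section edgeClasses

variable [DecidableEq V] {Γ : SimpleGraph (Sym2 V)}

theorem card_biUnion_toFinset_le (hΓ : ∀ e f, Γ.Adj e f → ∃ x, x ∈ e ∧ x ∈ f)
    {E : Finset (Sym2 V)} (hE : (Γ.induce (E : Set (Sym2 V))).Connected)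
    {L : Finset (Sym2 (Sym2 V))} (hL : ∀ e ∈ E, ∀ f ∈ E, Γ.Adj e f → s(e, f) ∈ L) :
    (E.biUnion Sym2.toFinset).card ≤ L.card + 2 := by
  refine induction_on_induce_connected (P := fun E => ∀ L : Finset (Sym2 (Sym2 V)),
    (∀ e ∈ E, ∀ f ∈ E, Γ.Adj e f → s(e, f) ∈ L) → (E.biUnion Sym2.toFinset).card ≤ L.card + 2)
    ?_ ?_ hE L hL
  · intro e L _
    rw [Finset.singleton_biUnion]
    have := e.card_toFinset_le_two
    omega
  · intro E e g he hg heg ih L hL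
    obtain ⟨x, hxe, hxg⟩ := hΓ e g heg
    have hlink : s(e, g) ∈ L := hL e (E.mem_insert_self e) g (Finset.mem_insert_of_mem hg) heg
    have hE : (E.biUnion Sym2.toFinset).card ≤ (L.erase s(e, g)).card + 2 := by
      refine ih _ fun f hf f' hf' hff' => Finset.mem_erase.mpr
        ⟨?_, hL f (Finset.mem_insert_of_mem hf) f' (Finset.mem_insert_of_mem hf') hff'⟩
      intro hfe
      have : e ∈ s(f, f') := hfe ▸ Sym2.mem_mk_left e g
      rcases Sym2.mem_iff.mp this with rfl | rfl <;> contradiction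
    rw [Finset.biUnion_insert]
    have := Sym2.card_toFinset_union_le hxe
      (Finset.mem_biUnion.mpr ⟨g, hg, Sym2.mem_toFinset.mpr hxg⟩)
    have := Finset.card_erase_of_mem hlink
    have := Finset.card_pos.mpr ⟨_, hlink⟩
    omega

theorem induce_toFinset_connected {e : Sym2 V} (he : e ∈ G.edgeSet) :
    (G.induce (e.toFinset : Set V)).Connected := by
  induction e using Sym2.ind with
  | _ x y =>
    rw [Sym2.toFinset_mk_eq, Finset.coe_pair]
    exact induce_pair_connected_of_adj he

theorem induce_biUnion_toFinset_connected (hΓ : ∀ e f, Γ.Adj e f → ∃ x, x ∈ e ∧ x ∈ f)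
    {E : Finset (Sym2 V)} (hE : (Γ.induce (E : Set (Sym2 V))).Connected)
    (hEG : ∀ e ∈ E, e ∈ G.edgeSet) :
    (G.induce (E.biUnion Sym2.toFinset : Set V)).Connected := by
  refine induction_on_induce_connected (P := fun E => (∀ e ∈ E, e ∈ G.edgeSet) →
    (G.induce (E.biUnion Sym2.toFinset : Set V)).Connected) ?_ ?_ hE hEG
  · intro e he
    rw [Finset.singleton_biUnion]
    exact induce_toFinset_connected (he e (Finset.mem_singleton_self e))
  · intro E e g _ hg heg ih hEG
    obtain ⟨x, hxe, hxg⟩ := hΓ e g heg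
    rw [Finset.biUnion_insert, Finset.coe_union]
    exact induce_union_connected
      (induce_toFinset_connected (hEG e (E.mem_insert_self e))).preconnected
      (ih fun f hf => hEG f (Finset.mem_insert_of_mem hf)).preconnected
      ⟨x, Sym2.mem_toFinset.mpr hxe,
        Finset.mem_biUnion.mpr ⟨g, hg, Sym2.mem_toFinset.mpr hxg⟩⟩

end edgeClasses

theorem ConnectingTransitionSet.exists_connectingHypergraph [Fintype V]
    {T : Finset (Sym2 (Sym2 V))} (hT : G.ConnectingTransitionSet T) :
    ∃ H : Finset (Finset V), G.ConnectingHypergraph H ∧ hcost H ≤ T.card := by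
  classical
  obtain ⟨hTG, hTconn⟩ := hT
  set Γ := transitionGraph (T : Set (Sym2 (Sym2 V)))
  have hshare : ∀ e f, Γ.Adj e f → ∃ x, x ∈ e ∧ x ∈ f := fun _ _ h =>
    (hTG _ (transitionGraph_adj.mp h).2).mem_edgeSet_and_exists_mem.2
  let verts (C : Γ.ConnectedComponent) : Finset V := C.supp.toFinset.biUnion Sym2.toFinset
  have hconn (C : Γ.ConnectedComponent) :
      (Γ.induce (C.supp.toFinset : Set (Sym2 V))).Connected := by
    rw [Set.coe_toFinset]
    exact C.connected_toSimpleGraph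
  have mem_verts {x : V} {e : Sym2 V} (hx : x ∈ e) : x ∈ verts (Γ.connectedComponentMk e) :=
    Finset.mem_biUnion.mpr ⟨e, by simp, Sym2.mem_toFinset.mpr hx⟩
  let comps := G.edgeFinset.image Γ.connectedComponentMk
  refine ⟨comps.image verts, ⟨?_, fun u v huv _ => ?_⟩, ?_⟩
  · simp only [comps, Finset.mem_image, mem_edgeFinset]
    rintro _ ⟨_, ⟨e, he, rfl⟩, rfl⟩
    induction e using Sym2.ind with
    | _ x y =>
    refine ⟨Finset.one_lt_card.mpr ⟨x, mem_verts (Sym2.mem_mk_left x y), y,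
      mem_verts (Sym2.mem_mk_right x y), G.ne_of_adj he⟩, ?_⟩
    refine induce_biUnion_toFinset_connected hshare (hconn _) fun f hf => ?_
    rw [Set.mem_toFinset, ConnectedComponent.mem_supp_iff, ConnectedComponent.eq] at hf
    exact mem_edgeSet_of_transitionGraph_reachable hTG he hf.symm
  · obtain ⟨p, hp⟩ := tConnected_iff.mp hTconn u v
    have hnil : ¬p.Nil := Walk.not_nil_of_ne huv
    refine ⟨_, Finset.mem_image_of_mem _ (Finset.mem_image_of_mem _
      (mem_edgeFinset.mpr (p.adj_snd hnil))), mem_verts (Sym2.mem_mk_left _ _), ?_⟩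
    rw [ConnectedComponent.sound (hp.transitionGraph_reachable
      (Walk.not_nil_iff_lt_length.mp hnil))]
    exact mem_verts (Sym2.mem_mk_right _ _)
  · -- both edges of a transition of `T` lie in one class, so either of them may name it
    refine hcost_image_le comps verts T (fun t => Γ.connectedComponentMk t.out.1)
      fun C _ => card_biUnion_toFinset_le hshare (hconn C) fun e he f hf hef => ?_
    simp only [Set.mem_toFinset, ConnectedComponent.mem_supp_iff] at he hf
    refine Finset.mem_filter.mpr ⟨(transitionGraph_adj.mp hef).2, ?_⟩
    rcases Sym2.mem_iff.mp (Sym2.out_fst_mem s(e, f)) with h | h <;> simp only [h, he, hf]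

end SimpleGraph

theorem stmt8_general {V : Type*} [Fintype V] (G : SimpleGraph V) :
    sInf {n : ℕ | ∃ T : Finset (Sym2 (Sym2 V)),
        G.ConnectingTransitionSet T ∧ T.card = n} =
    sInf {n : ℕ | ∃ H : Finset (Finset V),
        G.ConnectingHypergraph H ∧ hcost H = n} := by
  apply Nat.sInf_eq_sInf_of_forall_exists_le
  · rintro _ ⟨T, hT, rfl⟩
    obtain ⟨H, hH, hle⟩ := hT.exists_connectingHypergraph
    exact ⟨_, ⟨H, hH, rfl⟩, hle⟩
  · rintro _ ⟨H, hH, rfl⟩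
    obtain ⟨T, hT, hle⟩ := hH.exists_connectingTransitionSet
    exact ⟨_, ⟨T, hT, rfl⟩, hle⟩

/-- For every connected graph with at least 2 vertices, the minimum size of a connecting
transition set equals the minimum cost of a connecting hypergraph. -/
theorem stmt8 {V : Type*} [Fintype V] [DecidableEq V] (G : SimpleGraph V)
    (hc : G.Connected) (h2 : 2 ≤ Fintype.card V) :
    sInf {n : ℕ | ∃ T : Finset (Sym2 (Sym2 V)),
        G.ConnectingTransitionSet T ∧ T.card = n} =
    sInf {n : ℕ | ∃ H : Finset (Finset V),
        G.ConnectingHypergraph H ∧ hcost H = n} :=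
  stmt8_general G
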